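/- Let Y be a connected topological space covered by finitely many nonempty open sets U_1, …, U_n, each U_i connected, and let F be a sheaf of abelian groups on Y such that each F|_{U_i} is isomorphic to a subsheaf of a constant sheaf. If s ∈ F(Y) vanishes on some nonempty open V ⊆ Y, then s = 0. -/

import Mathlib

open CategoryTheory TopologicalSpace Opposite

/-- "Contamination" lemma: let `Y` be a connected space, `F` a sheaf of abelian
groups on `Y`, and `U₁, …, Uₙ` a finite open cover of `Y` by nonempty connected
opens such that each restriction `F|_{Uᵢ}` embeds into a constant sheaf (given by
compatible injective additive maps into locally constant functions valued in an
abelian group `Aᵢ`).  If a global section `s` of `F` vanishes on some nonempty open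
`V`, then `s = 0`. -/
theorem stmt6 (Y : TopCat) [ConnectedSpace Y]
    (F : TopCat.Presheaf AddCommGrpCat Y) (hF : F.IsSheaf)
    (n : ℕ) (U : Fin n → Opens Y)
    (hconn : ∀ i, IsConnected (U i : Set Y))
    (hcover : (⊤ : Opens Y) = ⨆ i, U i)
    (A : Fin n → Type) [instA : ∀ i, AddCommGroup (A i)]
    -- the embedding of `F|_{Uᵢ}` into the constant sheaf with fiber `Aᵢ`
    (φ : ∀ (i : Fin n) (W : Opens Y), W ≤ U i →
      (F.obj (op W) →+ LocallyConstant (W : Set Y) (A i)))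
    (hinj : ∀ (i : Fin n) (W : Opens Y) (hW : W ≤ U i), Function.Injective (φ i W hW))
    (hres : ∀ (i : Fin n) (W W' : Opens Y) (hW : W ≤ U i) (h : W' ≤ W)
      (s : F.obj (op W)) (x : (W' : Set Y)),
      φ i W' (le_trans h hW) ((F.map (homOfLE h).op) s) x =
        φ i W hW s ⟨x.1, h x.2⟩)
    -- a global section vanishing on a nonempty open `V`
    (s : F.obj (op ⊤)) (V : Opens Y) (hV : (V : Set Y).Nonempty)
    (hvanish : (F.map (homOfLE (le_top : V ≤ ⊤)).op) s = 0) :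
    s = 0 := by
  classical
  have hcomp : ∀ (W₁ W₂ W₃ : Opens Y) (a : W₃ ≤ W₂) (b : W₂ ≤ W₁) (u : F.obj (op W₁)),
      F.map (homOfLE a).op (F.map (homOfLE b).op u) = F.map (homOfLE (a.trans b)).op u := by
    intro W₁ W₂ W₃ a b u
    rw [← comp_apply, ← F.map_comp]
    rfl
  -- abbreviation: restriction of `s` to `U i`
  set t : ∀ i, F.obj (op (U i)) := fun i => F.map (homOfLE (le_top : U i ≤ ⊤)).op s with ht
  -- contamination on a single `U i`
  have contam : ∀ (i : Fin n) (W : Opens Y) (hW : W ≤ U i), (W : Set Y).Nonempty →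
      F.map (homOfLE hW).op (t i) = 0 → t i = 0 := by
    rintro i W hW ⟨x, hx⟩ h0
    haveI : PreconnectedSpace (U i : Set Y) :=
      Subtype.preconnectedSpace (hconn i).isPreconnected
    apply hinj i (U i) le_rfl
    rw [map_zero]
    ext y
    have hval : φ i (U i) le_rfl (t i) ⟨x, hW hx⟩ = 0 := by
      have := hres i (U i) W le_rfl hW (t i) ⟨x, hx⟩
      rw [h0] at this
      simpa using this.symm
    have := ((φ i (U i) le_rfl (t i)).apply_eq_of_isPreconnected
      (s := Set.univ) isPreconnected_univ (x := y) (y := ⟨x, hW hx⟩) trivial trivial)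
    exact this.trans hval
  -- vanishing on the overlap with a `U j` where `s` vanishes gives `t i = 0`
  have spread : ∀ i j : Fin n, ((U i : Set Y) ∩ U j).Nonempty → t j = 0 → t i = 0 := by
    intro i j hne hj
    apply contam i (U i ⊓ U j) inf_le_left hne
    have h1 := hcomp (⊤ : Opens Y) (U i) (U i ⊓ U j) inf_le_left le_top s
    have h2 := hcomp (⊤ : Opens Y) (U j) (U i ⊓ U j) inf_le_right le_top s
    rw [ht] at hj ⊢
    simp only [h1, h2.symm, hj, map_zero]
  -- there is some `i` with `t i = 0`
  obtain ⟨x, hxV⟩ := hV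
  have hxU : ∃ i, x ∈ U i := by
    have : x ∈ (⊤ : Opens Y) := trivial
    rw [hcover] at this
    exact Opens.mem_iSup.mp this
  obtain ⟨i₀, hi₀⟩ := hxU
  have hizero : t i₀ = 0 := by
    apply contam i₀ (U i₀ ⊓ V) inf_le_left ⟨x, hi₀, hxV⟩
    have h1 := hcomp (⊤ : Opens Y) (U i₀) (U i₀ ⊓ V) inf_le_left le_top s
    have h2 := hcomp (⊤ : Opens Y) V (U i₀ ⊓ V) inf_le_right le_top s
    rw [ht]
    simp only [h1, h2.symm, hvanish, map_zero]
  -- the union of the `U i` with `t i = 0` is clopen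
  set T : Set Y := ⋃ i ∈ {i | t i = 0}, (U i : Set Y) with hT
  have hTopen : IsOpen T := isOpen_biUnion fun i _ => (U i).isOpen
  have hTcompl : Tᶜ = ⋃ i ∈ {i | t i ≠ 0}, (U i : Set Y) := by
    apply subset_antisymm
    · intro y hy
      have : y ∈ (⊤ : Opens Y) := trivial
      rw [hcover] at this
      obtain ⟨j, hj⟩ := Opens.mem_iSup.mp this
      refine Set.mem_biUnion (fun h0 : t j = 0 => hy (Set.mem_biUnion h0 hj)) hj
    · intro y hy hyT
      obtain ⟨j, hj, hyj⟩ := Set.mem_iUnion₂.mp hy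
      obtain ⟨k, hk, hyk⟩ := Set.mem_iUnion₂.mp hyT
      exact hj (spread j k ⟨y, hyj, hyk⟩ hk)
  have hTclosed : IsClosed T := by
    rw [← isOpen_compl_iff, hTcompl]
    exact isOpen_biUnion fun i _ => (U i).isOpen
  have hTne : T.Nonempty := ⟨x, Set.mem_biUnion hizero hi₀⟩
  have hTuniv : T = Set.univ :=
    (isClopen_iff.mp ⟨hTclosed, hTopen⟩).resolve_left (Set.nonempty_iff_ne_empty.mp hTne)
  -- hence every `t i = 0`
  have hall : ∀ i, t i = 0 := by
    intro i
    obtain ⟨y, hy⟩ := (hconn i).nonempty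
    have hyT : y ∈ T := hTuniv ▸ Set.mem_univ y
    obtain ⟨k, hk, hyk⟩ := Set.mem_iUnion₂.mp hyT
    exact spread i k ⟨y, hy, hyk⟩ hk
  -- conclude by separatedness, extracted from the sheaf condition via `coyoneda`
  have hall' : ∀ (W : Opens Y) (f : W ⟶ ⊤), (∃ i, W ≤ U i) → F.map f.op s = 0 := by
    rintro W f ⟨i, hWi⟩
    have hf : f = homOfLE (hWi.trans le_top) := Subsingleton.elim _ _
    rw [hf, ← hcomp ⊤ (U i) W hWi le_top s]
    rw [show F.map (homOfLE le_top).op s = t i from rfl, hall i, map_zero]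
  let S : Sieve (⊤ : Opens Y) :=
    { arrows := fun W _ => ∃ i, W ≤ U i
      downward_closed := fun ⟨i, hi⟩ g => ⟨i, g.le.trans hi⟩ }
  have hScov : S ∈ Opens.grothendieckTopology Y (⊤ : Opens Y) := by
    intro z _
    have hz : z ∈ (⊤ : Opens Y) := trivial
    rw [hcover] at hz
    obtain ⟨i, hi⟩ := Opens.mem_iSup.mp hz
    exact ⟨U i, homOfLE le_top, ⟨i, le_rfl⟩, hi⟩
  let Z := AddCommGrpCat.of (ULift ℤ)
  let t₁ : Z ⟶ F.obj (op ⊤) := AddCommGrpCat.ofHom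
    ((zmultiplesHom _ s).comp AddEquiv.ulift.toAddMonoidHom : ULift ℤ →+ F.obj (op ⊤))
  have hsep := ((hF Z) S hScov).isSeparatedFor
  have key : t₁ = (0 : Z ⟶ F.obj (op ⊤)) := by
    apply hsep.ext
    intro W f hf
    show t₁ ≫ F.map f.op = (0 : Z ⟶ F.obj (op ⊤)) ≫ F.map f.op
    rw [Limits.zero_comp]
    apply AddCommGrpCat.ext
    rintro ⟨k⟩
    show F.map f.op (t₁ (ULift.up k)) = 0
    have ht₁ : t₁ (ULift.up k) = k • s := rfl
    rw [ht₁, map_zsmul, hall' W f hf, smul_zero]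
  have hone : t₁ (ULift.up 1) = s := one_zsmul s
  rw [key] at hone
  exact hone.symm
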